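/- Define the map T on (C^p)^{⊗Y} by T(|d^Y⟩) = p^{-(|L|+|X|)/2} Σ_{d^L ∈ F_p^{|L|}} Σ_{d^X ∈ F_p^{|X|}} e^{−(2πi/p)·μ(d^X,d^Y,d^L)} |d^L d^X⟩, where μ = ½ (d^X,d^Y,d^L)^t Ā (d^X,d^Y,d^L) for a symmetric matrix Ā over F_p (p odd) with zero blocks Ā_{XX} = Ā_{LL} = Ā_{XL} = 0 and |X| + |L| = |Y|. If the block Ā_{(X∪L),Y} is invertible over F_p, then T is a unitary map from (C^p)^{⊗Y} onto (C^p)^{⊗(L∪X)}. -/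

import Mathlib

/-!
The vanishing blocks of `Ā` leave only the cross term `2 g ⬝ B y` and a quadratic form in `y`
alone, so the kernel of `T` is `c · e(g ⬝ B y + q y)` with `c² p^{|X|+|L|} = 1`. The `(y, y')`
entry of `T†T` is then `c² e(q y' - q y) Σ_g e(g ⬝ B (y' - y))`, and by orthogonality of characters
the sum is `p^{|X|+|L|}` if `B (y' - y) = 0`, i.e. `y = y'`, and `0` otherwise. So `T†T = 1`,
and `T` is onto because `|X| + |L| = |Y|`.
-/

open Matrix Finset

namespace AddChar

lemma map_sum_eq_prod {A M ι : Type*} [AddCommMonoid A] [CommMonoid M] (ψ : AddChar A M)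
    (s : Finset ι) (f : ι → A) : ψ (∑ i ∈ s, f i) = ∏ i ∈ s, ψ (f i) := by
  classical
  induction s using Finset.induction_on with
  | empty => simp
  | insert a s ha ih => rw [sum_insert ha, prod_insert ha, map_add_eq_mul, ih]

lemma IsPrimitive.inv {R M : Type*} [CommRing R] [CommMonoid M] {ψ : AddChar R M}
    (hψ : ψ.IsPrimitive) : ψ⁻¹.IsPrimitive := fun a ha h => hψ (neg_ne_zero.2 ha) <| by
  ext x
  simpa using DFunLike.congr_fun h x

lemma sum_apply_dotProduct {R M α : Type*} [CommRing R] [Fintype R] [DecidableEq R] [CommRing M]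
    [IsDomain M] {ψ : AddChar R M} (hψ : ψ.IsPrimitive) [Fintype α] [DecidableEq α]
    (v : α → R) :
    ∑ g : α → R, ψ (g ⬝ᵥ v) = if v = 0 then (Fintype.card R : M) ^ Fintype.card α else 0 := by
  have hfactor : ∑ g : α → R, ψ (g ⬝ᵥ v) = ∏ a, ∑ x : R, ψ (x * v a) := by
    simp only [dotProduct, map_sum_eq_prod, Fintype.prod_sum]
  rw [hfactor]
  split_ifs with hv
  · simp [hv]
  · obtain ⟨a, ha⟩ := Function.ne_iff.mp hv
    exact prod_eq_zero (mem_univ a) (by simp [sum_mulShift _ hψ, show v a ≠ 0 from ha])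

end AddChar

lemma sum_mul_sum_mul_swap {R ι κ : Type*} [CommSemiring R] [Fintype ι] [Fintype κ]
    (a : κ → R) (M : ι → κ → R) (b : ι → R) :
    ∑ k, a k * ∑ i, M i k * b i = ∑ i, b i * ∑ k, M i k * a k := by
  simp only [mul_sum]
  rw [sum_comm]
  exact sum_congr rfl fun _ _ => sum_congr rfl fun _ _ => by ring

theorem Matrix.IsSymm.dotProduct_mulVec_sumElim {R X Y L : Type*} [CommRing R] [Fintype X]
    [Fintype Y] [Fintype L]
    {A : Matrix (X ⊕ Y ⊕ L) (X ⊕ Y ⊕ L) R} (hA : A.IsSymm)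
    (hXX : ∀ x x', A (Sum.inl x) (Sum.inl x') = 0)
    (hLL : ∀ l l', A (Sum.inr (Sum.inr l)) (Sum.inr (Sum.inr l')) = 0)
    (hXL : ∀ x l, A (Sum.inl x) (Sum.inr (Sum.inr l)) = 0)
    (B : Matrix (X ⊕ L) Y R)
    (hB : ∀ xl y, B xl y = A (Sum.elim Sum.inl (Sum.inr ∘ Sum.inr) xl) (Sum.inr (Sum.inl y)))
    (dX : X → R) (dY : Y → R) (dL : L → R) :
    Sum.elim dX (Sum.elim dY dL) ⬝ᵥ A *ᵥ Sum.elim dX (Sum.elim dY dL) =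
      2 * (Sum.elim dX dL ⬝ᵥ B *ᵥ dY) +
        dY ⬝ᵥ A.submatrix (Sum.inr ∘ Sum.inl) (Sum.inr ∘ Sum.inl) *ᵥ dY := by
  simp only [dotProduct, mulVec, Fintype.sum_sum_type, Sum.elim_inl, Sum.elim_inr, hXX, hLL,
    fun l x => (hA.apply (Sum.inl x) (Sum.inr (Sum.inr l))).trans (hXL x l), hXL, hB,
    fun y x => hA.apply (Sum.inl x) (Sum.inr (Sum.inl y)),
    fun y l => hA.apply (Sum.inr (Sum.inr l)) (Sum.inr (Sum.inl y)),
    submatrix_apply, Function.comp_apply, mul_add, sum_add_distrib, zero_mul, sum_const_zero,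
    mul_zero, add_zero]
  rw [sum_mul_sum_mul_swap dY _ dX, sum_mul_sum_mul_swap dY _ dL]
  ring

lemma Real.rpow_neg_div_two_sq_mul_pow {x : ℝ} (hx : 0 < x) (n : ℕ) :
    (x ^ (-(n : ℝ) / 2)) ^ 2 * x ^ n = 1 := by
  rw [← Real.rpow_natCast, ← Real.rpow_mul hx.le, ← Real.rpow_natCast, ← Real.rpow_add hx]
  norm_num

lemma ZMod.inv_stdAddChar_apply {N : ℕ} [NeZero N] (j : ZMod N) :
    (ZMod.stdAddChar)⁻¹ j = Complex.exp (-(2 * Real.pi * Complex.I * (j.val : ℕ) / N)) := by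
  rw [AddChar.inv_apply', ZMod.stdAddChar_apply, ZMod.toCircle_apply, Complex.exp_neg]

section PhaseMatrix

variable {R α β : Type*} [CommRing R] [Fintype R] [DecidableEq R] [Fintype α] [DecidableEq α]
  [Fintype β]

def quadraticPhaseMatrix (ψ : AddChar R ℂ) (c : ℝ) (B : Matrix α β R) (q : (β → R) → R) :
    Matrix (α → R) (β → R) ℂ :=
  of fun g y => c * ψ (g ⬝ᵥ B *ᵥ y + q y)

theorem quadraticPhaseMatrix_conjTranspose_mul_self {ψ : AddChar R ℂ} (hψ : ψ.IsPrimitive)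
    {c : ℝ} (hc : c ^ 2 * (Fintype.card R : ℝ) ^ Fintype.card α = 1)
    {B : Matrix α β R} (hB : Function.Injective B.mulVec) (q : (β → R) → R) :
    (quadraticPhaseMatrix ψ c B q)ᴴ * quadraticPhaseMatrix ψ c B q = 1 := by
  ext y y'
  have hentry : ∀ g : α → R,
      star (quadraticPhaseMatrix ψ c B q g y) * quadraticPhaseMatrix ψ c B q g y' =
        c ^ 2 * ψ (q y' - q y) * ψ (g ⬝ᵥ B *ᵥ (y' - y)) := by
    intro g
    simp only [quadraticPhaseMatrix, of_apply, star_mul', Complex.star_def, Complex.conj_ofReal,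
      ← AddChar.map_neg_eq_conj]
    rw [mulVec_sub, dotProduct_sub, mul_mul_mul_comm, ← sq, ← AddChar.map_add_eq_mul, mul_assoc,
      ← AddChar.map_add_eq_mul]
    congr 2
    ring
  calc ((quadraticPhaseMatrix ψ c B q)ᴴ * quadraticPhaseMatrix ψ c B q) y y'
      = ∑ g : α → R, c ^ 2 * ψ (q y' - q y) * ψ (g ⬝ᵥ B *ᵥ (y' - y)) := by
        simp only [mul_apply, conjTranspose_apply, hentry]
    _ = (1 : Matrix (β → R) (β → R) ℂ) y y' := by
        rw [← mul_sum, AddChar.sum_apply_dotProduct hψ]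
        by_cases hyy : y = y'
        · subst hyy
          simp only [sub_self, mulVec_zero, if_true, AddChar.map_zero_eq_one, mul_one, one_apply_eq]
          exact_mod_cast hc
        · have hBy : B *ᵥ (y' - y) ≠ 0 := fun h =>
            hyy (sub_eq_zero.1 (hB (h.trans (mulVec_zero B).symm))).symm
          rw [if_neg hBy, mul_zero, one_apply_ne hyy]

end PhaseMatrix

namespace Matrix

variable {𝕜 m n : Type*} [RCLike 𝕜] [Fintype m] [DecidableEq m] [Fintype n] [DecidableEq n]
  {K : Matrix m n 𝕜}

theorem inner_toEuclideanLin_of_conjTranspose_mul_self (hK : Kᴴ * K = 1)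
    (x y : EuclideanSpace 𝕜 n) :
    inner 𝕜 (toEuclideanLin K x) (toEuclideanLin K y) = inner 𝕜 x y := by
  rw [← LinearMap.adjoint_inner_right, ← toEuclideanLin_conjTranspose_eq_adjoint,
    ← LinearMap.comp_apply, ← toLpLin_mul_same, hK, toLpLin_one, LinearMap.id_apply]

theorem bijective_toEuclideanLin_of_conjTranspose_mul_self (hK : Kᴴ * K = 1)
    (hcard : Fintype.card n = Fintype.card m) : Function.Bijective (toEuclideanLin K) := by
  have hinj : Function.Injective (toEuclideanLin K) := by
    refine Function.LeftInverse.injective (g := toEuclideanLin Kᴴ) fun x => ?_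
    rw [← LinearMap.comp_apply, ← toLpLin_mul_same, hK, toLpLin_one, LinearMap.id_apply]
  refine ⟨hinj, (LinearMap.injective_iff_surjective_of_finrank_eq_finrank ?_).1 hinj⟩
  simp only [finrank_euclideanSpace, hcard]

end Matrix

open Matrix

/-- The inverse-quantum-Fourier-transform decoding operator
`T(|d^Y⟩) = p^{-(|L|+|X|)/2} Σ_{d^L,d^X} e^{−(2πi/p) μ(d^X,d^Y,d^L)} |d^L d^X⟩`, with
`μ = ½ (d^X,d^Y,d^L)ᵀ Ā (d^X,d^Y,d^L)` for a symmetric `Ā` over `F_p` (`p` odd) with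
`Ā_{XX} = Ā_{LL} = Ā_{XL} = 0` and `|X| + |L| = |Y|`, is unitary from `(ℂ^p)^{⊗Y}` onto
`(ℂ^p)^{⊗(L∪X)}` whenever the block `Ā_{(X∪L),Y}` is invertible over `F_p`. -/
theorem graph_code_decoder_unitary (p : ℕ) [Fact p.Prime] (hp : p ≠ 2)
    (X Y L : Type) [Fintype X] [Fintype Y] [Fintype L]
    [DecidableEq X] [DecidableEq Y] [DecidableEq L]
    (hcard : Fintype.card X + Fintype.card L = Fintype.card Y)
    (A : Matrix (X ⊕ Y ⊕ L) (X ⊕ Y ⊕ L) (ZMod p)) (hA : A.IsSymm)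
    (hXX : ∀ x x', A (Sum.inl x) (Sum.inl x') = 0)
    (hLL : ∀ l l', A (Sum.inr (Sum.inr l)) (Sum.inr (Sum.inr l')) = 0)
    (hXL : ∀ x l, A (Sum.inl x) (Sum.inr (Sum.inr l)) = 0)
    (B : Matrix (X ⊕ L) Y (ZMod p))
    (hB : ∀ xl y, B xl y =
      A (Sum.elim Sum.inl (Sum.inr ∘ Sum.inr) xl) (Sum.inr (Sum.inl y)))
    (hinv : ∃ C : Matrix Y (X ⊕ L) (ZMod p), B * C = 1 ∧ C * B = 1)
    (μ : (X → ZMod p) → (Y → ZMod p) → (L → ZMod p) → ZMod p)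
    (hμ : ∀ dX dY dL, μ dX dY dL = (2 : ZMod p)⁻¹ *
      (Sum.elim dX (Sum.elim dY dL) ⬝ᵥ A.mulVec (Sum.elim dX (Sum.elim dY dL))))
    (T : EuclideanSpace ℂ (Y → ZMod p) → EuclideanSpace ℂ (X ⊕ L → ZMod p))
    (hT : ∀ ψ g, T ψ g =
      (((p : ℝ) ^ (-((Fintype.card L : ℝ) + (Fintype.card X : ℝ)) / 2) : ℝ) : ℂ) *
      ∑ dY : Y → ZMod p,
        Complex.exp (-(2 * Real.pi * Complex.I *
          ((μ (fun x => g (Sum.inl x)) dY (fun l => g (Sum.inr l))).val : ℕ) / p)) *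
          ψ dY) :
    (∀ ψ φ : EuclideanSpace ℂ (Y → ZMod p), (inner ℂ (T ψ) (T φ) : ℂ) = inner ℂ ψ φ) ∧
    Function.Bijective T := by
  obtain ⟨C, -, hCB⟩ := hinv
  have hBinj : Function.Injective B.mulVec :=
    Function.LeftInverse.injective (g := C.mulVec) fun u => by rw [mulVec_mulVec, hCB, one_mulVec]
  have htwo : (2 : ZMod p) ≠ 0 := Ring.two_ne_zero (by rwa [ZMod.ringChar_zmod_n])
  set q : (Y → ZMod p) → ZMod p := fun dY =>
    (2 : ZMod p)⁻¹ * (dY ⬝ᵥ A.submatrix (Sum.inr ∘ Sum.inl) (Sum.inr ∘ Sum.inl) *ᵥ dY)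
  set c : ℝ := (p : ℝ) ^ (-((Fintype.card L : ℝ) + (Fintype.card X : ℝ)) / 2)
  have hphase : ∀ g dY, μ (fun x => g (Sum.inl x)) dY (fun l => g (Sum.inr l)) =
      g ⬝ᵥ B *ᵥ dY + q dY := fun g dY => by
    rw [hμ, hA.dotProduct_mulVec_sumElim hXX hLL hXL B hB, mul_add, ← mul_assoc,
      inv_mul_cancel₀ htwo, one_mul]
    exact congrArg (· ⬝ᵥ B *ᵥ dY + q dY) (Sum.elim_comp_inl_inr g)
  have hc : c ^ 2 * (Fintype.card (ZMod p) : ℝ) ^ Fintype.card (X ⊕ L) = 1 := by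
    have h := Real.rpow_neg_div_two_sq_mul_pow (Nat.cast_pos.2 (Fact.out : p.Prime).pos)
      (Fintype.card L + Fintype.card X)
    rw [ZMod.card, Fintype.card_sum, add_comm]
    push_cast at h
    exact h
  have hK := quadraticPhaseMatrix_conjTranspose_mul_self
    (ZMod.isPrimitive_stdAddChar p).inv hc hBinj q
  obtain rfl : T = toEuclideanLin (quadraticPhaseMatrix ZMod.stdAddChar⁻¹ c B q) := by
    funext ψ
    ext g
    rw [hT, ofLp_toLpLin, toLin'_apply]
    simp only [mulVec, dotProduct, mul_sum]
    refine sum_congr rfl fun dY _ => ?_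
    rw [quadraticPhaseMatrix, of_apply, ← hphase, ZMod.inv_stdAddChar_apply]
    exact (mul_assoc _ _ _).symm
  refine ⟨inner_toEuclideanLin_of_conjTranspose_mul_self hK,
    bijective_toEuclideanLin_of_conjTranspose_mul_self hK ?_⟩
  simp [Fintype.card_sum, hcard]
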